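/- Let ab be an edge in a finite simplicial complex K, let K̂ = K ∪ (a * closure(St b)) be the complex obtained from K by adding all cones from a over simplices of the closed star of b, and let i: K ↪ K̂ be the inclusion. If ab satisfies the p-link condition in K, then the induced homomorphism i_*: H_p(K) → H_p(K̂) on p-th simplicial homology with integer coefficients is injective. -/

import Mathlib

namespace ECpaper

variable {V : Type*} [LinearOrder V]

/-- A finite abstract simplicial complex on a (linearly ordered) vertex type `V`:
a finite collection of nonempty finite subsets of `V` such that every nonempty
subset of a member is a member. -/
structure SC (V : Type*) [LinearOrder V] where
  faces : Finset (Finset V)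
  nonempty_of_mem : ∀ σ ∈ faces, σ.Nonempty
  down_closed : ∀ σ ∈ faces, ∀ τ ⊆ σ, τ.Nonempty → τ ∈ faces

/-- The star of a set `X` of simplices: all simplices of `K` having some member
of `X` as a face. -/
def starOf (K : SC V) (X : Set (Finset V)) : Set (Finset V) :=
  {τ | τ ∈ K.faces ∧ ∃ σ ∈ X, σ ⊆ τ}

/-- The closure of a set `S` of simplices of `K`: all simplices of `S` together
with all of their faces. -/
def closureOf (K : SC V) (S : Set (Finset V)) : Set (Finset V) :=
  {τ | τ ∈ K.faces ∧ ∃ σ ∈ S, τ ⊆ σ}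

/-- The link of a set `X` of simplices: the simplices in the closure of the star of `X`
that do not belong to the star of the closure of `X`. -/
def linkOf (K : SC V) (X : Set (Finset V)) : Set (Finset V) :=
  closureOf K (starOf K X) \ starOf K (closureOf K X)

/-- The link of a vertex `a`. -/
def linkV (K : SC V) (a : V) : Set (Finset V) := linkOf K {{a}}

/-- The link of the edge `ab`. -/
def linkE (K : SC V) (a b : V) : Set (Finset V) := linkOf K {({a, b} : Finset V)}

/-- The link condition for the edge `ab` in `K`: `Lk a ∩ Lk b = Lk ab`. -/
def LinkCond (K : SC V) (a b : V) : Prop :=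
  linkV K a ∩ linkV K b = linkE K a b

/-- The `p`-link condition for the edge `ab` in `K`: either `p ≤ 0`, or `p > 0` and every
`(p-1)`-simplex (i.e. simplex of cardinality `p`) of `Lk a ∩ Lk b` lies in `Lk ab`. -/
def PLink (K : SC V) (a b : V) (p : ℤ) : Prop :=
  p ≤ 0 ∨ (0 < p ∧ ∀ ξ ∈ linkV K a ∩ linkV K b, (ξ.card : ℤ) = p → ξ ∈ linkE K a b)

/-- The dimension of a simplicial complex. -/
def dimSC (K : SC V) : ℤ := ((K.faces.sup Finset.card : ℕ) : ℤ) - 1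

/-- The vertex map of the contraction of the edge `ab`: identity everywhere except
that `b` is sent to `a`. -/
def contr (a b : V) : V → V := fun v => if v = b then a else v

/-- The ambient module of simplicial chains (over all dimensions) with `ℤ` coefficients;
the basis element corresponding to a finset is that simplex with its vertices in
increasing order. -/
abbrev FChain (V : Type*) [LinearOrder V] := Finset V →₀ ℤ

/-- The boundary of a single simplex (zero on vertices and on the empty set). -/
noncomputable def bndOf (σ : Finset V) : FChain V :=
  if σ.card ≤ 1 then 0
  else ∑ v ∈ σ, ((-1 : ℤ) ^ ((σ.filter (fun x => x < v)).card)) •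
        Finsupp.single (σ.erase v) (1 : ℤ)

/-- The simplicial boundary operator. -/
noncomputable def bnd : FChain V →ₗ[ℤ] FChain V :=
  Finsupp.lsum ℤ fun σ => LinearMap.toSpanSingleton ℤ (FChain V) (bndOf σ)

/-- The group of `p`-chains of `K`: the span of the `p`-simplices of `K`. -/
noncomputable def chains (K : SC V) (p : ℕ) : Submodule ℤ (FChain V) :=
  Submodule.span ℤ {x : FChain V | ∃ σ ∈ K.faces, σ.card = p + 1 ∧ x = Finsupp.single σ 1}

/-- The group of `p`-cycles of `K`. -/
noncomputable def cycles (K : SC V) (p : ℕ) : Submodule ℤ (FChain V) :=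
  chains K p ⊓ LinearMap.ker bnd

/-- The group of `p`-boundaries of `K`. -/
noncomputable def bdries (K : SC V) (p : ℕ) : Submodule ℤ (FChain V) :=
  (chains K (p + 1)).map bnd

/-- The `p`-th simplicial homology group of `K` with integer coefficients. -/
abbrev Hmlgy (K : SC V) (p : ℕ) : Type _ :=
  ↥(cycles K p) ⧸ ((bdries K p).comap (cycles K p).subtype)

/-- The homology class of a cycle. -/
noncomputable def HmlgyMk (K : SC V) (p : ℕ) (z : FChain V) (hz : z ∈ cycles K p) :
    Hmlgy K p :=
  Submodule.Quotient.mk ⟨z, hz⟩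

/-- The number of inversions in a list. -/
def inversions : List V → ℕ
  | [] => 0
  | x :: xs => (xs.filter (fun y => decide (y < x))).length + inversions xs

/-- Value of the chain map induced by a vertex map `f` on a single simplex: zero if `f` is
not injective on the simplex, and otherwise the image simplex signed by the permutation
rearranging the images of the vertices (in increasing order) into increasing order. -/
noncomputable def cmapOf (f : V → V) (σ : Finset V) : FChain V :=
  if (σ.image f).card = σ.card then
    ((-1 : ℤ) ^ inversions ((σ.sort (· ≤ ·)).map f)) • Finsupp.single (σ.image f) 1
  else 0

/-- The chain map induced by a vertex map `f`. -/
noncomputable def cmap (f : V → V) : FChain V →ₗ[ℤ] FChain V :=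
  Finsupp.lsum ℤ fun σ => LinearMap.toSpanSingleton ℤ (FChain V) (cmapOf f σ)

/-- Relative `p`-cycles of the pair `(L, L0)`: `p`-chains of `L` whose boundary is a
chain of `L0`. -/
noncomputable def relCycles (L L0 : SC V) (p : ℕ) : Submodule ℤ (FChain V) :=
  chains L p ⊓ Submodule.comap bnd (chains L0 (p - 1))

/-- Relative `p`-boundaries of the pair `(L, L0)`: boundaries of `(p+1)`-chains of `L`
together with `p`-chains of `L0`. -/
noncomputable def relBdries (L L0 : SC V) (p : ℕ) : Submodule ℤ (FChain V) :=
  (chains L (p + 1)).map bnd ⊔ chains L0 p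

/-- The `p`-th relative simplicial homology group of the pair `(L, L0)` with
integer coefficients. -/
abbrev RelHmlgy (L L0 : SC V) (p : ℕ) : Type _ :=
  ↥(relCycles L L0 p) ⧸ ((relBdries L L0 p).comap (relCycles L L0 p).subtype)

/-- The relative homology class of a relative cycle. -/
noncomputable def RelHmlgyMk (L L0 : SC V) (p : ℕ) (z : FChain V)
    (hz : z ∈ relCycles L L0 p) : RelHmlgy L L0 p :=
  Submodule.Quotient.mk ⟨z, hz⟩

/-- A pure simplicial complex of dimension `p`: it is formed by a (nonempty) collection of
`p`-simplices and all their proper faces. -/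
def IsPure (L : SC V) (p : ℕ) : Prop :=
  (∀ σ ∈ L.faces, ∃ τ ∈ L.faces, σ ⊆ τ ∧ τ.card = p + 1) ∧ ∃ σ ∈ L.faces, σ.card = p + 1

/-- An orientation of a complex: a choice of sign (`1` if the chosen orientation of the simplex
is the increasing order of the vertices, `-1` if the opposite) for each simplex. -/
def IsOrientation (K : SC V) (o : Finset V → ℤ) : Prop :=
  ∀ σ ∈ K.faces, o σ = 1 ∨ o σ = -1

/-- Incidence sign (with respect to increasing vertex order) between a codimension-one
face `σ` and a simplex `τ`: `(-1)^i` where `i` is the position in `τ` of the vertex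
missing in `σ`. -/
def incSign (σ τ : Finset V) : ℤ :=
  ∏ v ∈ τ \ σ, (-1 : ℤ) ^ ((τ.filter (fun x => x < v)).card)

/-- An edge of the graph `G_q(K)`: a pair of a `(q-1)`-simplex and an incident `q`-simplex. -/
def IsGEdge (K : SC V) (q : ℕ) (e : Finset V × Finset V) : Prop :=
  e.1 ∈ K.faces ∧ e.2 ∈ K.faces ∧ e.1.card = q ∧ e.2.card = q + 1 ∧ e.1 ⊆ e.2

/-- A circuit of the graph `G_q(K)`: a set of edges of `G_q(K)` in which every vertex of the
graph has even degree. -/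
def IsCircuit (K : SC V) (q : ℕ) (C : Finset (Finset V × Finset V)) : Prop :=
  (∀ e ∈ C, IsGEdge K q e) ∧
  ∀ ρ : Finset V,
    Even ((C.filter (fun e => e.1 = ρ)).card + (C.filter (fun e => e.2 = ρ)).card)

/-- Weight of an edge of `G_q(K)` under the orientation `o`. -/
def edgeWeight (o : Finset V → ℤ) (e : Finset V × Finset V) : ℤ :=
  o e.1 * o e.2 * incSign e.1 e.2

/-- Total weight of a circuit under the orientation `o`. -/
def circWeight (o : Finset V → ℤ) (C : Finset (Finset V × Finset V)) : ℤ :=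
  ∑ e ∈ C, edgeWeight o e

/-- A circuit is b-even if the sum of its edge weights is `0 mod 4`. -/
def BEven (o : Finset V → ℤ) (C : Finset (Finset V × Finset V)) : Prop :=
  circWeight o C % 4 = 0

/-- A circuit is b-odd if the sum of its edge weights is `2 mod 4`. -/
def BOdd (o : Finset V → ℤ) (C : Finset (Finset V × Finset V)) : Prop :=
  circWeight o C % 4 = 2

/-- A circuit `C` of `G_q(K)` has a chord: an edge of the graph not in `C` both of whose
endpoints are vertices of `C`. -/
def HasChord (K : SC V) (q : ℕ) (C : Finset (Finset V × Finset V)) : Prop :=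
  ∃ e : Finset V × Finset V, IsGEdge K q e ∧ e ∉ C ∧
    (∃ c ∈ C, c.1 = e.1) ∧ (∃ c ∈ C, c.2 = e.2)

/-- The boundary matrix `[∂_{p+1}]` of an oriented complex: rows indexed by `p`-simplices,
columns by `(p+1)`-simplices, entries the signed incidence numbers. -/
def boundaryMatrixSucc (K : SC V) (o : Finset V → ℤ) (p : ℕ) :
    Matrix {σ : Finset V // σ ∈ K.faces ∧ σ.card = p + 1}
      {τ : Finset V // τ ∈ K.faces ∧ τ.card = p + 2} ℤ :=
  fun σ τ => if σ.1 ⊆ τ.1 then edgeWeight o (σ.1, τ.1) else 0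

/-- `σ` is a collapsing simplex (w.r.t. contraction of `ab`). -/
def IsCollapsing (a b : V) (σ : Finset V) : Prop := a ∈ σ ∧ b ∈ σ

/-- `σ` and `σ'` are mirror simplices (w.r.t. contraction of `ab`). -/
def IsMirror (a b : V) (σ σ' : Finset V) : Prop :=
  a ∈ σ ∧ b ∈ σ' ∧ σ = insert a (σ'.erase b)

/-- The circuit `C` of `G_{p+1}(K)` contains (an edge incident to) a collapsing `p`-vertex. -/
def ContainsCollapsingLow (a b : V) (C : Finset (Finset V × Finset V)) : Prop :=
  ∃ e ∈ C, IsCollapsing a b e.1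

/-- The circuit `C` of `G_{p+1}(K)` contains a pair of `(p+1)`-vertices that are mirrors of
each other. -/
def ContainsMirrorHigh (a b : V) (C : Finset (Finset V × Finset V)) : Prop :=
  ∃ e ∈ C, ∃ e' ∈ C, IsMirror a b e.2 e'.2

/-!
If a `p`-cycle `z` of `K` bounds in `K̂`, it bounds a chain `c + a * d` with `c` in `K` and
`b * η ∈ K` for every simplex `η` of `d`, because the new simplices of `K̂` are cones from `a`
over faces of `St b`. Coning is a chain homotopy between the identity and the augmentation
`ε = aug`, `∂(v * x) + v * ∂x = x - ε(x) v`, and applying it four times gives the prism identity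
`∂(a * d) = ∂(b * d + a * b * ∂d + ε(d) a * b)`. The right-hand chain lies in `K`: a simplex `ξ`
of `∂d` has `a * ξ ∈ K`, since `a * ∂d` is the part of the `K`-chain `∂(a * d)` through `a`, and
`b * ξ ∈ K` as a face of some `b * η`; so the `(p-1)`-simplex `ξ` lies in `Lk a ∩ Lk b`, and the
`p`-link condition gives `a * b * ξ ∈ K`.
-/

open Finsupp

section Chains

/-- The sign with which the face opposite to `v` occurs in the boundary of `σ`. -/
def sgn (σ : Finset V) (v : V) : ℤ := (-1) ^ (σ.filter (· < v)).card

lemma sgn_mul_self (σ : Finset V) (v : V) : sgn σ v * sgn σ v = 1 := by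
  simp [sgn, ← pow_add, ← two_mul, pow_mul]

lemma sgn_insert {a : V} {σ : Finset V} (ha : a ∉ σ) (v : V) :
    sgn (insert a σ) v = (if a < v then -1 else 1) * sgn σ v := by
  unfold sgn
  rw [Finset.filter_insert]
  split
  · rw [Finset.card_insert_of_notMem fun h => ha (Finset.mem_filter.1 h).1, pow_succ]; ring
  · ring

lemma sgn_erase {w : V} {σ : Finset V} (hw : w ∈ σ) (v : V) :
    sgn σ v = (if w < v then -1 else 1) * sgn (σ.erase w) v := by
  conv_lhs => rw [← Finset.insert_erase hw]
  rw [sgn_insert (Finset.notMem_erase w σ) v]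

lemma sgn_insert_self (a : V) (σ : Finset V) : sgn (insert a σ) a = sgn σ a := by
  simp only [sgn, Finset.filter_insert, lt_irrefl, if_false]

lemma sgn_singleton_self (v : V) : sgn {v} v = 1 := by
  simp [sgn, Finset.filter_singleton]

lemma bndOf_eq_sum {σ : Finset V} (h : 2 ≤ σ.card) :
    bndOf σ = ∑ v ∈ σ, sgn σ v • single (σ.erase v) 1 := by
  rw [bndOf, if_neg (by omega)]; rfl

noncomputable def linearExt (g : Finset V → FChain V) : FChain V →ₗ[ℤ] FChain V :=
  Finsupp.lsum ℤ fun σ => LinearMap.toSpanSingleton ℤ (FChain V) (g σ)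

@[simp] lemma linearExt_single (g : Finset V → FChain V) (σ : Finset V) (c : ℤ) :
    linearExt g (single σ c) = c • g σ := by
  simp [linearExt, LinearMap.toSpanSingleton_apply]

lemma support_linearExt_subset (g : Finset V → FChain V) (x : FChain V) :
    (linearExt g x).support ⊆ x.support.biUnion fun σ => (g σ).support := by
  rw [linearExt, lsum_apply]
  refine support_sum.trans fun ρ hρ => ?_
  obtain ⟨σ, hσ, hρσ⟩ := Finset.mem_biUnion.1 hρ
  exact Finset.mem_biUnion.2 ⟨σ, hσ, support_smul hρσ⟩

@[simp] lemma bnd_single (σ : Finset V) (c : ℤ) : bnd (single σ c) = c • bndOf σ :=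
  linearExt_single bndOf σ c

lemma linearMap_eq_of_eq_on_single {M : Type*} [AddCommGroup M] [Module ℤ M]
    {P : Finset V → Prop} (F G : FChain V →ₗ[ℤ] M)
    (h : ∀ σ, P σ → F (single σ 1) = G (single σ 1)) {x : FChain V}
    (hx : ∀ σ ∈ x.support, P σ) : F x = G x := by
  rw [← sum_single x, map_finsuppSum, map_finsuppSum]
  refine sum_congr fun σ hσ => ?_
  rw [← smul_single_one, F.map_smul, G.map_smul, h σ (hx σ hσ)]

/-- The cone `v * σ`, oriented with the apex first. -/
noncomputable def coneOf (v : V) (σ : Finset V) : FChain V :=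
  if v ∈ σ then 0 else sgn (insert v σ) v • single (insert v σ) 1

noncomputable def cone (v : V) : FChain V →ₗ[ℤ] FChain V := linearExt (coneOf v)

noncomputable def stripOf (v : V) (τ : Finset V) : FChain V :=
  if v ∈ τ then sgn τ v • single (τ.erase v) 1 else 0

noncomputable def strip (v : V) : FChain V →ₗ[ℤ] FChain V := linearExt (stripOf v)

noncomputable def aug : FChain V →ₗ[ℤ] ℤ :=
  Finsupp.lsum ℤ fun σ => if σ.card = 1 then LinearMap.id else 0

@[simp] lemma aug_single (σ : Finset V) (c : ℤ) :
    aug (single σ c) = if σ.card = 1 then c else 0 := by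
  by_cases h : σ.card = 1 <;> simp [aug, h]

lemma aug_eq_zero {x : FChain V} (hx : ∀ σ ∈ x.support, σ.card ≠ 1) : aug x = 0 :=
  linearMap_eq_of_eq_on_single aug 0 (fun σ hσ => by simp [hσ]) hx

end Chains

section Boundary

lemma sgn_mul_sgn_erase_add_sgn_mul_sgn_erase {v w : V} {σ : Finset V} (hv : v ∈ σ) (hw : w ∈ σ)
    (hvw : v ≠ w) : sgn σ v * sgn (σ.erase v) w + sgn σ w * sgn (σ.erase w) v = 0 := by
  rw [sgn_erase hv w, sgn_erase hw v]
  rcases hvw.lt_or_gt with h | h <;> simp [h, h.not_gt] <;> ring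

lemma bnd_bndOf (σ : Finset V) : bnd (bndOf σ) = 0 := by
  rcases le_or_gt σ.card 2 with h2 | h3
  · rw [bndOf]
    split_ifs with h1
    · exact map_zero _
    refine (map_sum _ _ _).trans (Finset.sum_eq_zero fun v hv => ?_)
    rw [map_zsmul, bnd_single, bndOf, if_pos (by rw [Finset.card_erase_of_mem hv]; omega)]
    simp
  have hface : ∀ v ∈ σ, bnd (sgn σ v • single (σ.erase v) 1) =
      ∑ w ∈ σ.erase v, (sgn σ v * sgn (σ.erase v) w) • single ((σ.erase v).erase w) 1 := by
    intro v hv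
    rw [map_zsmul, bnd_single, one_smul,
      bndOf_eq_sum (by rw [Finset.card_erase_of_mem hv]; omega), Finset.smul_sum]
    simp only [smul_smul]
  rw [bndOf_eq_sum h3.le, map_sum, Finset.sum_congr rfl hface, Finset.sum_sigma']
  -- the terms for `(v, w)` and `(w, v)` cancel
  refine Finset.sum_involution (fun i _ => ⟨i.2, i.1⟩) ?_ ?_ ?_ fun _ _ => rfl
  · rintro ⟨v, w⟩ hi
    obtain ⟨hv, hw⟩ := Finset.mem_sigma.1 hi
    obtain ⟨hwv, hwσ⟩ := Finset.mem_erase.1 hw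
    rw [Finset.erase_right_comm, ← add_smul,
      sgn_mul_sgn_erase_add_sgn_mul_sgn_erase hv hwσ hwv.symm, zero_smul]
  · rintro ⟨v, w⟩ hi _ h
    exact (Finset.ne_of_mem_erase (Finset.mem_sigma.1 hi).2) (congrArg Sigma.fst h)
  · rintro ⟨v, w⟩ hi
    obtain ⟨hv, hw⟩ := Finset.mem_sigma.1 hi
    obtain ⟨hwv, hwσ⟩ := Finset.mem_erase.1 hw
    exact Finset.mem_sigma.2 ⟨hwσ, Finset.mem_erase.2 ⟨hwv.symm, hv⟩⟩

lemma bnd_bnd (x : FChain V) : bnd (bnd x) = 0 :=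
  linearMap_eq_of_eq_on_single (P := fun _ => True) (bnd ∘ₗ bnd) 0
    (fun σ _ => by simp [bnd_bndOf]) (fun _ _ => trivial)

lemma aug_bndOf (σ : Finset V) : aug (bndOf σ) = 0 := by
  rcases le_or_gt σ.card 1 with h1 | h2
  · rw [bndOf, if_pos h1, map_zero]
  rw [bndOf_eq_sum h2, map_sum]
  rcases (Nat.succ_le_of_lt h2).lt_or_eq with h3 | h2
  · refine Finset.sum_eq_zero fun v hv => ?_
    rw [map_zsmul, aug_single, if_neg (by rw [Finset.card_erase_of_mem hv]; omega), smul_zero]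
  obtain ⟨x, y, hxy, rfl⟩ := Finset.card_eq_two.1 h2.symm
  rcases hxy.lt_or_gt with h | h <;>
    simp [Finset.sum_pair hxy, sgn, Finset.filter_insert, Finset.filter_singleton, h, h.not_gt,
      h.ne, h.ne']

lemma aug_bnd (x : FChain V) : aug (bnd x) = 0 :=
  linearMap_eq_of_eq_on_single (P := fun _ => True) (aug ∘ₗ bnd) 0
    (fun σ _ => by simp [aug_bndOf]) (fun _ _ => trivial)

lemma exists_of_mem_support_bnd {x : FChain V} {ρ : Finset V} (hρ : ρ ∈ (bnd x).support) :
    ∃ σ ∈ x.support, ∃ v ∈ σ, 2 ≤ σ.card ∧ ρ = σ.erase v := by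
  obtain ⟨σ, hσ, hρσ⟩ := Finset.mem_biUnion.1 (support_linearExt_subset bndOf x hρ)
  rw [bndOf] at hρσ
  split_ifs at hρσ with h1
  · simp at hρσ
  obtain ⟨v, hv, hρv⟩ := Finset.mem_biUnion.1 (support_finsetSum hρσ)
  exact ⟨σ, hσ, v, hv, by omega, Finset.mem_singleton.1 (support_single_subset (support_smul hρv))⟩

lemma nonempty_of_mem_support_bnd {x : FChain V} {ρ : Finset V} (hρ : ρ ∈ (bnd x).support) :
    ρ.Nonempty := by
  obtain ⟨σ, -, v, hv, h2, rfl⟩ := exists_of_mem_support_bnd hρ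
  rw [← Finset.card_pos, Finset.card_erase_of_mem hv]; omega

end Boundary

section Cone

@[simp] lemma cone_single (v : V) (σ : Finset V) (c : ℤ) :
    cone v (single σ c) = c • coneOf v σ :=
  linearExt_single _ σ c

@[simp] lemma strip_single (v : V) (τ : Finset V) (c : ℤ) :
    strip v (single τ c) = c • stripOf v τ :=
  linearExt_single _ τ c

lemma exists_of_mem_support_cone {v : V} {x : FChain V} {ρ : Finset V}
    (hρ : ρ ∈ (cone v x).support) : ∃ σ ∈ x.support, v ∉ σ ∧ ρ = insert v σ := by
  obtain ⟨σ, hσ, hρσ⟩ := Finset.mem_biUnion.1 (support_linearExt_subset _ x hρ)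
  rw [coneOf] at hρσ
  split_ifs at hρσ with hv
  · simp at hρσ
  exact ⟨σ, hσ, hv, Finset.mem_singleton.1 (support_single_subset (support_smul hρσ))⟩

lemma exists_of_mem_support_strip {v : V} {x : FChain V} {ρ : Finset V}
    (hρ : ρ ∈ (strip v x).support) : ∃ τ ∈ x.support, v ∈ τ ∧ ρ = τ.erase v := by
  obtain ⟨τ, hτ, hρτ⟩ := Finset.mem_biUnion.1 (support_linearExt_subset _ x hρ)
  rw [stripOf] at hρτ
  split_ifs at hρτ with hv
  · exact ⟨τ, hτ, hv, Finset.mem_singleton.1 (support_single_subset (support_smul hρτ))⟩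
  · simp at hρτ

lemma cone_apply_insert (v : V) (x : FChain V) {ξ : Finset V} (hξ : v ∉ ξ) :
    cone v x (insert v ξ) = sgn (insert v ξ) v * x ξ := by
  refine linearMap_eq_of_eq_on_single (P := fun _ => True) (lapply (insert v ξ) ∘ₗ cone v)
    (sgn (insert v ξ) v • lapply ξ) (fun σ _ => ?_) (fun _ _ => trivial)
  simp only [LinearMap.comp_apply, LinearMap.smul_apply, lapply_apply, cone_single, one_smul,
    coneOf, smul_eq_mul]
  by_cases hσ : v ∈ σ
  · rw [if_pos hσ, single_eq_of_ne (by rintro rfl; exact hξ hσ)]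
    simp
  · have hinj : insert v σ = insert v ξ ↔ σ = ξ :=
      ⟨fun h => by simpa [hσ, hξ] using congrArg (·.erase v) h, fun h => h ▸ rfl⟩
    rw [if_neg hσ]
    by_cases h : σ = ξ
    · subst h; simp
    · simp [hinj, h]

lemma cone_strip {v : V} {x : FChain V} (hx : ∀ τ ∈ x.support, v ∈ τ) :
    cone v (strip v x) = x := by
  refine linearMap_eq_of_eq_on_single (cone v ∘ₗ strip v) LinearMap.id (fun τ hτ => ?_) hx
  simp only [LinearMap.comp_apply, strip_single, stripOf, if_pos hτ, map_zsmul, cone_single,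
    coneOf, Finset.notMem_erase, if_false, Finset.insert_erase hτ, smul_smul, one_mul,
    sgn_mul_self, one_smul, LinearMap.id_apply]

/-- The sum is `v * ∂σ` when `σ` is not a vertex; for a vertex `σ = {w}` it is `v * ∅ = {v}`. -/
lemma bnd_coneOf_of_notMem {v : V} {σ : Finset V} (hv : v ∉ σ) (hσ : σ.Nonempty) :
    bnd (coneOf v σ) = single σ 1 - ∑ w ∈ σ, sgn σ w • coneOf v (σ.erase w) := by
  have hcard : 2 ≤ (insert v σ).card := by
    rw [Finset.card_insert_of_notMem hv]; have := hσ.card_pos; omega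
  rw [coneOf, if_neg hv, map_zsmul, bnd_single, one_smul, bndOf_eq_sum hcard,
    Finset.sum_insert hv, Finset.erase_insert hv, smul_add, smul_smul, sgn_mul_self, one_smul,
    Finset.smul_sum, sub_eq_add_neg, ← Finset.sum_neg_distrib]
  congr 1
  refine Finset.sum_congr rfl fun w hw => ?_
  have hvw : v ≠ w := by rintro rfl; exact hv hw
  rw [coneOf, if_neg fun h => hv (Finset.mem_of_mem_erase h), smul_smul, smul_smul,
    Finset.erase_insert_of_ne hvw, ← neg_smul, sgn_insert_self, sgn_insert_self,
    sgn_insert hv w, sgn_erase hw v]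
  congr 1
  rcases hvw.lt_or_gt with h | h <;> simp [h, h.not_gt] <;> ring

lemma cone_bndOf_of_mem {v : V} {σ : Finset V} (hv : v ∈ σ) (h2 : 2 ≤ σ.card) :
    cone v (bndOf σ) = single σ 1 := by
  rw [bndOf_eq_sum h2, map_sum, Finset.sum_eq_single v]
  · rw [map_zsmul, cone_single, one_smul, coneOf, if_neg (Finset.notMem_erase v σ),
      Finset.insert_erase hv, smul_smul, sgn_mul_self, one_smul]
  · intro w _ hwv
    rw [map_zsmul, cone_single, coneOf, if_pos (Finset.mem_erase.2 ⟨hwv.symm, hv⟩)]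
    simp
  · exact absurd hv

lemma bnd_coneOf_add_cone_bndOf (v : V) {σ : Finset V} (hσ : σ.Nonempty) :
    bnd (coneOf v σ) + cone v (bndOf σ) = single σ 1 - aug (single σ 1) • single {v} 1 := by
  rw [aug_single]
  rcases (Nat.succ_le_of_lt hσ.card_pos).lt_or_eq with h2 | h1
  · rw [if_neg h2.ne', zero_smul, sub_zero]
    by_cases hv : v ∈ σ
    · rw [coneOf, if_pos hv, map_zero, zero_add, cone_bndOf_of_mem hv h2]
    · simp [bnd_coneOf_of_notMem hv hσ, bndOf_eq_sum h2]
  obtain ⟨w, rfl⟩ := Finset.card_eq_one.1 h1.symm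
  rw [bndOf, if_pos (Finset.card_singleton w).le, map_zero, add_zero,
    if_pos (Finset.card_singleton w), one_smul]
  by_cases hv : v = w
  · subst hv; simp [coneOf]
  · rw [bnd_coneOf_of_notMem (by simpa using hv) (Finset.singleton_nonempty w),
      Finset.sum_singleton, Finset.erase_singleton, coneOf, if_neg (Finset.notMem_empty v),
      Finset.insert_empty, sgn_singleton_self, sgn_singleton_self, one_smul, one_smul]

theorem bnd_cone_add_cone_bnd (v : V) {x : FChain V} (hx : ∀ σ ∈ x.support, σ.Nonempty) :
    bnd (cone v x) + cone v (bnd x) = x - aug x • single {v} 1 :=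
  linearMap_eq_of_eq_on_single (bnd ∘ₗ cone v + cone v ∘ₗ bnd)
    (LinearMap.id - aug.smulRight (single {v} 1))
    (fun σ hσ => by simpa using bnd_coneOf_add_cone_bndOf v hσ) hx

end Cone

section Prism

lemma aug_cone (v : V) (x : FChain V) (hx : ∀ σ ∈ x.support, σ.Nonempty) :
    aug (cone v x) = 0 := by
  refine aug_eq_zero fun ρ hρ => ?_
  obtain ⟨σ, hσ, hv, rfl⟩ := exists_of_mem_support_cone hρ
  have := (hx σ hσ).card_pos
  rw [Finset.card_insert_of_notMem hv]; omega

lemma bnd_cone_single_singleton (a b : V) :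
    bnd (cone a (single {b} 1)) = single {b} 1 - single {a} 1 := by
  have h := bnd_cone_add_cone_bnd a (x := single {b} 1) (by simp)
  rwa [bnd_single, bndOf, if_pos (Finset.card_singleton b).le, smul_zero, map_zero, add_zero,
    aug_single, if_pos (Finset.card_singleton b), one_smul] at h

theorem bnd_cone_eq_bnd_prism (a b : V) {d : FChain V}
    (hd : ∀ σ ∈ d.support, σ.Nonempty) :
    bnd (cone a d) =
      bnd (cone b d + cone a (cone b (bnd d)) + aug d • cone a (single {b} 1)) := by
  have hbnd : ∀ σ ∈ (bnd d).support, σ.Nonempty := fun σ => nonempty_of_mem_support_bnd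
  have hcone : ∀ σ ∈ (cone b (bnd d)).support, σ.Nonempty := fun σ hσ => by
    obtain ⟨ξ, -, -, rfl⟩ := exists_of_mem_support_cone hσ
    exact Finset.insert_nonempty b ξ
  have ha := bnd_cone_add_cone_bnd a hd
  have hb := bnd_cone_add_cone_bnd b hd
  have hab := bnd_cone_add_cone_bnd a hcone
  have hb' := bnd_cone_add_cone_bnd b hbnd
  rw [bnd_bnd, map_zero, add_zero, aug_bnd, zero_smul, sub_zero] at hb'
  rw [hb', aug_cone b _ hbnd, zero_smul, sub_zero] at hab
  rw [map_add, map_add, map_zsmul, bnd_cone_single_singleton,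
    eq_sub_of_add_eq ha, eq_sub_of_add_eq hb, eq_sub_of_add_eq hab]
  module

end Prism

section Complex

variable {K : SC V}

lemma mem_chains_iff {p : ℕ} {x : FChain V} :
    x ∈ chains K p ↔ ∀ σ ∈ x.support, σ ∈ K.faces ∧ σ.card = p + 1 := by
  have : chains K p = supported ℤ ℤ {σ | σ ∈ K.faces ∧ σ.card = p + 1} := by
    rw [chains, supported_eq_span_single]
    congr 1
    ext x
    simp [eq_comm, and_assoc]
  rw [this, mem_supported]
  rfl

lemma chains_mono {L : SC V} (h : K.faces ⊆ L.faces) (p : ℕ) : chains K p ≤ chains L p :=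
  Submodule.span_mono fun _ ⟨σ, hσ, hcard, hx⟩ => ⟨σ, h hσ, hcard, hx⟩

lemma bnd_mem_chains {p : ℕ} {c : FChain V} (hc : c ∈ chains K (p + 1)) : bnd c ∈ chains K p := by
  refine mem_chains_iff.2 fun ρ hρ => ?_
  obtain ⟨σ, hσ, v, hv, -, rfl⟩ := exists_of_mem_support_bnd hρ
  obtain ⟨hσK, hcard⟩ := mem_chains_iff.1 hc σ hσ
  exact ⟨K.down_closed σ hσK _ (Finset.erase_subset v σ) (nonempty_of_mem_support_bnd hρ),
    by rw [Finset.card_erase_of_mem hv, hcard]; rfl⟩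

lemma cone_mem_chains {p : ℕ} {v : V} {x : FChain V}
    (hx : ∀ σ ∈ x.support, v ∉ σ → insert v σ ∈ K.faces ∧ σ.card = p + 1) :
    cone v x ∈ chains K (p + 1) := by
  refine mem_chains_iff.2 fun ρ hρ => ?_
  obtain ⟨σ, hσ, hv, rfl⟩ := exists_of_mem_support_cone hρ
  obtain ⟨hK, hcard⟩ := hx σ hσ hv
  exact ⟨hK, by rw [Finset.card_insert_of_notMem hv, hcard]⟩

lemma HmlgyMk_eq_zero_iff {p : ℕ} {z : FChain V} (hz : z ∈ cycles K p) :
    HmlgyMk K p z hz = 0 ↔ z ∈ bdries K p := by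
  rw [HmlgyMk, Submodule.Quotient.mk_eq_zero, Submodule.mem_comap]
  rfl

lemma mem_linkV_of_insert_mem {v : V} {ξ : Finset V} (hv : v ∉ ξ) (hξ : ξ.Nonempty)
    (h : insert v ξ ∈ K.faces) : ξ ∈ linkV K v := by
  simp only [linkV, linkOf, Set.mem_sdiff, closureOf, starOf, Set.mem_ofPred_eq,
    Set.mem_singleton_iff, exists_eq_left, Finset.singleton_subset_iff, not_and, not_exists]
  refine ⟨⟨K.down_closed _ h ξ (Finset.subset_insert v ξ) hξ, insert v ξ,
    ⟨h, Finset.mem_insert_self v ξ⟩, Finset.subset_insert v ξ⟩, fun _ σ ⟨hσK, hσv⟩ hσξ => ?_⟩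
  obtain ⟨w, hw⟩ := K.nonempty_of_mem σ hσK
  exact hv (Finset.mem_singleton.1 (hσv hw) ▸ hσξ hw)

lemma insert_insert_mem_of_mem_linkE {a b : V} {ξ : Finset V} (h : ξ ∈ linkE K a b) :
    insert a (insert b ξ) ∈ K.faces := by
  simp only [linkE, linkOf, Set.mem_sdiff, closureOf, starOf, Set.mem_ofPred_eq,
    Set.mem_singleton_iff, exists_eq_left] at h
  obtain ⟨⟨-, σ, ⟨hσK, habσ⟩, hξσ⟩, -⟩ := h
  refine K.down_closed σ hσK _ ?_ (Finset.insert_nonempty a _)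
  rw [Finset.insert_eq, Finset.insert_eq, ← Finset.union_assoc, ← Finset.insert_eq]
  exact Finset.union_subset habσ hξσ

lemma PLink.insert_insert_mem {a b : V} {p : ℕ} (h : PLink K a b p) {ξ : Finset V}
    (hξ : ξ.Nonempty) (hcard : ξ.card = p) (ha : a ∉ ξ) (hb : b ∉ ξ)
    (hξa : insert a ξ ∈ K.faces) (hξb : insert b ξ ∈ K.faces) :
    insert a (insert b ξ) ∈ K.faces := by
  rcases h with hp | ⟨-, h⟩
  · have := hξ.card_pos; omega
  exact insert_insert_mem_of_mem_linkE (h ξ ⟨mem_linkV_of_insert_mem ha hξ hξa,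
    mem_linkV_of_insert_mem hb hξ hξb⟩ (by rw [hcard]))

end Complex

section ConeExtension

variable {K : SC V} {a b : V}

lemma mem_and_insert_erase_mem_of_subset_insert {σ τ : Finset V}
    (hσ : σ ∈ closureOf K (starOf K {{b}})) (hτ : τ ⊆ insert a σ) (hτne : τ.Nonempty)
    (hτK : τ ∉ K.faces) : a ∈ τ ∧ insert b (τ.erase a) ∈ K.faces := by
  obtain ⟨hσK, σ', ⟨hσ'K, s, rfl, hbσ'⟩, hσσ'⟩ := hσ
  have hτa : τ.erase a ⊆ σ := fun x hx => by
    simpa [(Finset.mem_erase.1 hx).1] using hτ (Finset.mem_of_mem_erase hx)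
  refine ⟨?_, K.down_closed σ' hσ'K _ ?_ (Finset.insert_nonempty _ _)⟩
  · by_contra ha
    exact hτK (K.down_closed σ hσK τ (Finset.erase_eq_of_notMem ha ▸ hτa) hτne)
  · exact Finset.insert_subset (Finset.singleton_subset_iff.1 hbσ') (hτa.trans hσσ')

lemma exists_eq_add_cone {Khat : SC V} {p : ℕ}
    (hKhat : ∀ τ ∈ Khat.faces, τ ∈ K.faces ∨
      (τ.Nonempty ∧ ∃ σ ∈ closureOf K (starOf K {{b}}), τ ⊆ insert a σ))
    {ĉ : FChain V} (hĉ : ĉ ∈ chains Khat (p + 1)) :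
    ∃ c ∈ chains K (p + 1), ∃ d : FChain V,
      (∀ η ∈ d.support, a ∉ η ∧ η.card = p + 1 ∧ insert b η ∈ K.faces) ∧ ĉ = c + cone a d := by
  have hnew : ∀ τ ∈ (ĉ.filter (· ∉ K.faces)).support,
      a ∈ τ ∧ τ.card = p + 2 ∧ insert b (τ.erase a) ∈ K.faces := by
    intro τ hτ
    rw [support_filter, Finset.mem_filter] at hτ
    obtain ⟨hτĉ, hτK⟩ := hτ
    obtain ⟨hτKhat, hcard⟩ := mem_chains_iff.1 hĉ τ hτĉ
    rcases hKhat τ hτKhat with h | ⟨hτne, σ, hσ, hτσ⟩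
    · exact absurd h hτK
    obtain ⟨ha, hb⟩ := mem_and_insert_erase_mem_of_subset_insert hσ hτσ hτne hτK
    exact ⟨ha, hcard, hb⟩
  refine ⟨ĉ.filter (· ∈ K.faces), mem_chains_iff.2 fun τ hτ => ?_,
    strip a (ĉ.filter (· ∉ K.faces)), fun η hη => ?_, ?_⟩
  · rw [support_filter, Finset.mem_filter] at hτ
    exact ⟨hτ.2, (mem_chains_iff.1 hĉ τ hτ.1).2⟩
  · obtain ⟨τ, hτ, haτ, rfl⟩ := exists_of_mem_support_strip hη
    obtain ⟨-, hcard, hb⟩ := hnew τ hτ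
    exact ⟨Finset.notMem_erase a τ, by rw [Finset.card_erase_of_mem haτ, hcard]; rfl, hb⟩
  · rw [cone_strip fun τ hτ => (hnew τ hτ).1, filter_add_filter_not]

lemma insert_mem_of_mem_support_bnd {p : ℕ} {d : FChain V}
    (hd : ∀ η ∈ d.support, a ∉ η ∧ η.Nonempty) (hK : bnd (cone a d) ∈ chains K p)
    {ξ : Finset V} (hξ : ξ ∈ (bnd d).support) : insert a ξ ∈ K.faces := by
  obtain ⟨η, hη, w, -, -, rfl⟩ := exists_of_mem_support_bnd hξ
  have ha : a ∉ η.erase w := fun h => (hd η hη).1 (Finset.mem_of_mem_erase h)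
  have hne : insert a (η.erase w) ≠ {a} := fun h => by
    obtain ⟨x, hx⟩ := nonempty_of_mem_support_bnd hξ
    exact ha (Finset.mem_singleton.1 (h ▸ Finset.mem_insert_of_mem hx) ▸ hx)
  -- evaluate `a * ∂d = d - ε(d) {a} - ∂(a * d)` at `a * ξ`
  have hhom := eq_sub_of_add_eq' (bnd_cone_add_cone_bnd a fun η hη => (hd η hη).2)
  have hval := congrArg (· (insert a (η.erase w))) hhom
  simp only [cone_apply_insert a _ ha, Finsupp.sub_apply, Finsupp.smul_apply,
    notMem_support_iff.1 fun h => (hd _ h).1 (Finset.mem_insert_self a _),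
    single_eq_of_ne hne, smul_zero, sub_zero, zero_sub] at hval
  refine (mem_chains_iff.1 hK _ (mem_support_iff.2 fun h => ?_)).1
  rw [h, neg_zero] at hval
  exact mul_ne_zero (pow_ne_zero _ (by norm_num)) (mem_support_iff.1 hξ) hval

lemma cone_cone_bnd_mem_chains {p : ℕ} (hpl : PLink K a b p) {d : FChain V}
    (hd : ∀ η ∈ d.support, a ∉ η ∧ η.card = p + 1 ∧ insert b η ∈ K.faces)
    (hK : bnd (cone a d) ∈ chains K p) : cone a (cone b (bnd d)) ∈ chains K (p + 1) := by
  refine cone_mem_chains fun ρ hρ haρ => ?_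
  obtain ⟨ξ, hξ, hbξ, rfl⟩ := exists_of_mem_support_cone hρ
  obtain ⟨η, hη, w, hw, -, hξη⟩ := exists_of_mem_support_bnd hξ
  obtain ⟨-, hcard, hbη⟩ := hd η hη
  have hξcard : ξ.card = p := by rw [hξη, Finset.card_erase_of_mem hw, hcard]; rfl
  have hξa : insert a ξ ∈ K.faces := insert_mem_of_mem_support_bnd
    (fun η hη => ⟨(hd η hη).1, Finset.card_pos.1 (by rw [(hd η hη).2.1]; omega)⟩) hK hξ
  have hξb : insert b ξ ∈ K.faces := K.down_closed _ hbη _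
    (Finset.insert_subset_insert b (hξη ▸ Finset.erase_subset w η)) (Finset.insert_nonempty b ξ)
  refine ⟨hpl.insert_insert_mem (nonempty_of_mem_support_bnd hξ) hξcard
    (fun h => haρ (Finset.mem_insert_of_mem h)) hbξ hξa hξb, ?_⟩
  rw [Finset.card_insert_of_notMem hbξ, hξcard]

theorem mem_bdries_of_mem_bdries_extension {Khat : SC V}
    (hKhat : ∀ τ ∈ Khat.faces, τ ∈ K.faces ∨
      (τ.Nonempty ∧ ∃ σ ∈ closureOf K (starOf K {{b}}), τ ⊆ insert a σ))
    (hab : ({a, b} : Finset V) ∈ K.faces) {p : ℕ} (hpl : PLink K a b p) {z : FChain V}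
    (hz : z ∈ chains K p) (hbd : z ∈ bdries Khat p) : z ∈ bdries K p := by
  obtain ⟨ĉ, hĉ, rfl⟩ := Submodule.mem_map.1 hbd
  obtain ⟨c, hc, d, hd, rfl⟩ := exists_eq_add_cone hKhat hĉ
  have hdne : ∀ η ∈ d.support, η.Nonempty := fun η hη =>
    Finset.card_pos.1 (by rw [(hd η hη).2.1]; omega)
  have hK : bnd (cone a d) ∈ chains K p := by
    simpa using sub_mem hz (bnd_mem_chains hc)
  have hcone : cone b d ∈ chains K (p + 1) :=
    cone_mem_chains fun η hη _ => ⟨(hd η hη).2.2, (hd η hη).2.1⟩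
  have haug : aug d • cone a (single {b} 1) ∈ chains K (p + 1) := by
    rcases Nat.eq_zero_or_pos p with rfl | hp
    · exact Submodule.smul_mem _ _ (cone_mem_chains fun σ hσ _ => by
        rw [Finset.mem_singleton.1 (support_single_subset hσ)]; exact ⟨hab, rfl⟩)
    · rw [aug_eq_zero fun η hη => by rw [(hd η hη).2.1]; omega, zero_smul]
      exact zero_mem _
  refine ⟨c + (cone b d + cone a (cone b (bnd d)) + aug d • cone a (single {b} 1)),
    add_mem hc (add_mem (add_mem hcone (cone_cone_bnd_mem_chains hpl hd hK)) haug), ?_⟩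
  rw [map_add bnd c (cone a d), bnd_cone_eq_bnd_prism a b hdne, map_add]

end ConeExtension

theorem statement4_general (K Khat : SC V) (a b : V)
    (hab : ({a, b} : Finset V) ∈ K.faces)
    (hKhat : ∀ τ : Finset V, τ ∈ Khat.faces ↔
      (τ ∈ K.faces ∨ (τ.Nonempty ∧ ∃ σ ∈ closureOf K (starOf K {{b}}), τ ⊆ insert a σ)))
    (p : ℕ) (hpl : PLink K a b (p : ℤ))
    (φ : Hmlgy K p →ₗ[ℤ] Hmlgy Khat p)
    (hφ : ∀ (z : FChain V) (hz : z ∈ cycles K p) (hz' : z ∈ cycles Khat p),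
      φ (HmlgyMk K p z hz) = HmlgyMk Khat p z hz') :
    Function.Injective φ := by
  have hsub : chains K p ≤ chains Khat p := chains_mono (fun τ hτ => (hKhat τ).2 (Or.inl hτ)) p
  refine (injective_iff_map_eq_zero φ).2 fun x hx => ?_
  obtain ⟨⟨z, hz⟩, rfl⟩ := Submodule.Quotient.mk_surjective _ x
  have hz' : z ∈ cycles Khat p := ⟨hsub hz.1, hz.2⟩
  change φ (HmlgyMk K p z hz) = 0 at hx
  change HmlgyMk K p z hz = 0
  rw [hφ z hz hz', HmlgyMk_eq_zero_iff] at hx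
  rw [HmlgyMk_eq_zero_iff]
  exact mem_bdries_of_mem_bdries_extension (fun τ => (hKhat τ).1) hab hpl hz.1 hx

/-- with `K̂ = K ∪ (a * closure(St b))`, if `ab` satisfies the `p`-link
condition then the inclusion-induced map `H_p(K) → H_p(K̂)` is injective. -/
theorem statement4 (K Khat : SC V) (a b : V) (hne : a ≠ b)
    (hab : ({a, b} : Finset V) ∈ K.faces)
    (hKhat : ∀ τ : Finset V, τ ∈ Khat.faces ↔
      (τ ∈ K.faces ∨ (τ.Nonempty ∧ ∃ σ ∈ closureOf K (starOf K {{b}}), τ ⊆ insert a σ)))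
    (p : ℕ) (hpl : PLink K a b (p : ℤ))
    (φ : Hmlgy K p →ₗ[ℤ] Hmlgy Khat p)
    (hφ : ∀ (z : FChain V) (hz : z ∈ cycles K p) (hz' : z ∈ cycles Khat p),
      φ (HmlgyMk K p z hz) = HmlgyMk Khat p z hz') :
    Function.Injective φ :=
  statement4_general K Khat a b hab hKhat p hpl φ hφ

end ECpaper
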